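/- arXiv:2512.04428 — 3 statements merged into one kernel-verified Lean document; each statement's English description precedes it below -/
import Mathlib

section
/- Let n, m ≥ 1 be integers and l ≥ 2m a real number. Let φ ∈ C^∞([0,∞)) have compact support, with 0 ≤ φ ≤ 1. Then there exists a constant C > 0 (depending on n, m, l and φ but not on τ) such that for every τ ≥ 0 and every y ∈ ℝ^n, the function ψ(y) := [φ(|y|^{2m} + τ)]^l satisfies |Δ^m ψ(y)| ≤ C [φ(|y|^{2m} + τ)]^{l − 2m}, where Δ^m is the m-fold iterate of the Laplacian in y. -/
open MeasureTheory Filter Set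
open scoped ENNReal Topology RealInnerProductSpace

/-- The Laplacian `Δf = ∑ ∂²f/∂x_i²` of a function on `ℝⁿ`. -/
noncomputable def lap (n : ℕ) (f : EuclideanSpace ℝ (Fin n) → ℝ)
    (x : EuclideanSpace ℝ (Fin n)) : ℝ :=
  ∑ i : Fin n,
    fderiv ℝ (fun y => fderiv ℝ f y (EuclideanSpace.single i (1:ℝ))) x
      (EuclideanSpace.single i (1:ℝ))

/-- The `m`-fold iterated Laplacian `Δ^m`. -/
noncomputable def iterLap (n m : ℕ) (f : EuclideanSpace ℝ (Fin n) → ℝ) :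
    EuclideanSpace ℝ (Fin n) → ℝ :=
  (lap n)^[m] f

/-- The cutoff `ψ_R(x,t) = [φ((|x|^{2m}+t)/R)]^l`. -/
noncomputable def psiR (n m : ℕ) (l : ℝ) (φ : ℝ → ℝ) (R : ℝ)
    (x : EuclideanSpace ℝ (Fin n)) (t : ℝ) : ℝ :=
  φ ((‖x‖ ^ (2 * m) + t) / R) ^ l

/-- The auxiliary profile `φ*`, vanishing on `[0,1/2)` and equal to `φ` on `[1/2,∞)`. -/
noncomputable def phiStar (φ : ℝ → ℝ) (s : ℝ) : ℝ :=
  if s < 1/2 then 0 else φ s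

/-- The auxiliary cutoff `ψ_R^*(x,t) = [φ*((|x|^{2m}+t)/R)]^l`. -/
noncomputable def psiStarR (n m : ℕ) (l : ℝ) (φ : ℝ → ℝ) (R : ℝ)
    (x : EuclideanSpace ℝ (Fin n)) (t : ℝ) : ℝ :=
  phiStar φ ((‖x‖ ^ (2 * m) + t) / R) ^ l


namespace Statement9Aux

open scoped ContDiff

/-- The term shape `a(y) · b(s) · φ(s)^(l-j)` with `s = ‖y‖^(2m) + τ`. -/
def Elem (n m : ℕ) (l : ℝ) (φ : ℝ → ℝ) (j : ℕ)
    (f : ℝ → EuclideanSpace ℝ (Fin n) → ℝ) : Prop :=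
  ∃ a : EuclideanSpace ℝ (Fin n) → ℝ, ∃ b : ℝ → ℝ,
    ContDiff ℝ ∞ a ∧ ContDiff ℝ ∞ b ∧
    (tsupport b ⊆ tsupport φ ∨ (j = 0 ∧ b = fun _ => 1)) ∧
    ∀ τ y, f τ y = a y * b (‖y‖ ^ (2 * m) + τ) * φ (‖y‖ ^ (2 * m) + τ) ^ (l - j)

inductive Good (n m : ℕ) (l : ℝ) (φ : ℝ → ℝ) :
    ℕ → (ℝ → EuclideanSpace ℝ (Fin n) → ℝ) → Prop
  | elem {k j : ℕ} {f} (hj : j ≤ k) (h : Elem n m l φ j f) : Good n m l φ k f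
  | add {k f g} (hf : Good n m l φ k f) (hg : Good n m l φ k g) :
      Good n m l φ k (fun τ y => f τ y + g τ y)
  | congr {k f g} (hf : Good n m l φ k f) (h : ∀ τ y, g τ y = f τ y) : Good n m l φ k g

variable {n m : ℕ} {l : ℝ} {φ : ℝ → ℝ}

lemma Good.mono {k k' f} (h : Good n m l φ k f) (hk : k ≤ k') : Good n m l φ k' f := by
  induction h with
  | elem hj he => exact Good.elem (hj.trans hk) he
  | add hf hg ihf ihg => exact Good.add ihf ihg
  | congr hf he ih => exact Good.congr ih he

lemma good_zero {k} : Good n m l φ k (fun _ _ => 0) := by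
  refine Good.elem (Nat.zero_le k) ⟨fun _ => 0, fun _ => 1, contDiff_const, contDiff_const,
    Or.inr ⟨rfl, rfl⟩, ?_⟩
  intro τ y; simp

lemma good_sum {k} {ι : Type*} (s : Finset ι) (F : ι → ℝ → EuclideanSpace ℝ (Fin n) → ℝ)
    (h : ∀ i ∈ s, Good n m l φ k (F i)) :
    Good n m l φ k (fun τ y => ∑ i ∈ s, F i τ y) := by
  classical
  induction s using Finset.induction with
  | empty => exact Good.congr good_zero (by simp)
  | @insert x s hx ih =>
      refine Good.congr (Good.add (h x (Finset.mem_insert_self x s))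
        (ih fun i hi => h i (Finset.mem_insert_of_mem hi))) ?_
      intro τ y
      rw [Finset.sum_insert hx]


variable {n m : ℕ} {l : ℝ} {φ : ℝ → ℝ}

lemma contDiff_NN : ContDiff ℝ ∞ (fun y : EuclideanSpace ℝ (Fin n) => ‖y‖ ^ (2 * m)) := by
  have h : (fun y : EuclideanSpace ℝ (Fin n) => ‖y‖ ^ (2 * m))
      = (fun t : ℝ => t ^ m) ∘ (fun y : EuclideanSpace ℝ (Fin n) => ‖y‖ ^ 2) := by
    funext y
    simp [Function.comp, ← pow_mul]
  rw [h]
  exact (contDiff_id.pow m).comp (contDiff_norm_sq ℝ)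

lemma fderiv_apply_contDiff {E : Type*} [NormedAddCommGroup E] [NormedSpace ℝ E]
    {a : E → ℝ} (ha : ContDiff ℝ ∞ a) (v : E) :
    ContDiff ℝ ∞ (fun y => fderiv ℝ a y v) :=
  (ha.fderiv_right (by simp)).clm_apply contDiff_const

lemma Elem.step (hφs : ContDiff ℝ ∞ φ) {j : ℕ} {f} (hj1 : 1 ≤ l - (j : ℝ))
    (h : Elem n m l φ j f) (i : Fin n) :
    (∀ τ, Differentiable ℝ (f τ)) ∧
    ∃ f1 f2 f3, Elem n m l φ j f1 ∧ Elem n m l φ j f2 ∧ Elem n m l φ (j + 1) f3 ∧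
      ∀ τ y, fderiv ℝ (f τ) y (EuclideanSpace.single i (1 : ℝ))
        = f1 τ y + f2 τ y + f3 τ y := by
  obtain ⟨a, b, ha, hb, hbs, hfe⟩ := h
  set N : EuclideanSpace ℝ (Fin n) → ℝ := fun y => ‖y‖ ^ (2 * m) with hN
  have hNc : ContDiff ℝ ∞ N := contDiff_NN
  set dN : EuclideanSpace ℝ (Fin n) → ℝ :=
    fun y => fderiv ℝ N y (EuclideanSpace.single i (1 : ℝ)) with hdN
  have hdNc : ContDiff ℝ ∞ dN := fderiv_apply_contDiff hNc _
  -- the pointwise derivative computation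
  have key : ∀ τ y, HasFDerivAt (f τ)
      ((a y * b (N y + τ)) •
        (((l - j) * φ (N y + τ) ^ (l - (j:ℝ) - 1) * deriv φ (N y + τ)) • fderiv ℝ N y)
       + (φ (N y + τ) ^ (l - (j:ℝ))) •
        (a y • (deriv b (N y + τ) • fderiv ℝ N y) + b (N y + τ) • fderiv ℝ a y)) y := by
    intro τ y
    have hS : HasFDerivAt (fun z => N z + τ) (fderiv ℝ N y) y :=
      ((hNc.differentiable (by norm_num)) y).hasFDerivAt.add_const τ
    have hb' : HasDerivAt b (deriv b (N y + τ)) (N y + τ) :=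
      ((hb.differentiable (by norm_num)) (N y + τ)).hasDerivAt
    have hφ' : HasDerivAt φ (deriv φ (N y + τ)) (N y + τ) :=
      ((hφs.differentiable (by norm_num)) (N y + τ)).hasDerivAt
    have hr : HasDerivAt (fun x : ℝ => x ^ (l - (j:ℝ)))
        ((l - j) * φ (N y + τ) ^ (l - (j:ℝ) - 1)) (φ (N y + τ)) :=
      Real.hasDerivAt_rpow_const (Or.inr hj1)
    have hg : HasDerivAt (fun s : ℝ => φ s ^ (l - (j:ℝ)))
        ((l - j) * φ (N y + τ) ^ (l - (j:ℝ) - 1) * deriv φ (N y + τ)) (N y + τ) := by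
      simpa [Function.comp_def] using hr.comp (N y + τ) hφ'
    have hBS : HasFDerivAt (fun z => b (N z + τ)) (deriv b (N y + τ) • fderiv ℝ N y) y := by
      simpa [Function.comp_def] using hb'.comp_hasFDerivAt y hS
    have hGS : HasFDerivAt (fun z => φ (N z + τ) ^ (l - (j:ℝ)))
        (((l - j) * φ (N y + τ) ^ (l - (j:ℝ) - 1) * deriv φ (N y + τ)) • fderiv ℝ N y) y := by
      simpa [Function.comp_def] using hg.comp_hasFDerivAt y hS
    have hA : HasFDerivAt a (fderiv ℝ a y) y := ((ha.differentiable (by norm_num)) y).hasFDerivAt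
    have h0 : HasFDerivAt (fun z => a z * b (N z + τ) * φ (N z + τ) ^ (l - (j:ℝ)))
        (_ • _ + _ • _) y := (hA.mul hBS).mul hGS
    have hfeq : f τ = fun z => a z * b (N z + τ) * φ (N z + τ) ^ (l - (j:ℝ)) :=
      funext fun z => hfe τ z
    rw [hfeq]
    convert h0 using 1
    all_goals rfl
  constructor
  · intro τ
    exact fun y => (key τ y).differentiableAt
  · refine ⟨fun τ y => (fun z => fderiv ℝ a z (EuclideanSpace.single i (1:ℝ))) y *
        b (‖y‖ ^ (2*m) + τ) * φ (‖y‖ ^ (2*m) + τ) ^ (l - (j:ℝ)),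
      fun τ y => (a y * dN y) * deriv b (‖y‖ ^ (2*m) + τ) * φ (‖y‖ ^ (2*m) + τ) ^ (l - (j:ℝ)),
      fun τ y => ((l - j) * (a y * dN y)) *
        (b (‖y‖ ^ (2*m) + τ) * deriv φ (‖y‖ ^ (2*m) + τ)) *
        φ (‖y‖ ^ (2*m) + τ) ^ (l - ((j:ℕ)+1 : ℕ)), ?_, ?_, ?_, ?_⟩
    · exact ⟨_, b, fderiv_apply_contDiff ha _, hb, hbs, fun τ y => rfl⟩
    · refine ⟨fun y => a y * dN y, deriv b, ha.mul hdNc,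
        (contDiff_infty_iff_deriv.mp hb).2, Or.inl ?_, fun τ y => rfl⟩
      rcases hbs with hbs | ⟨_, hb1⟩
      · exact (closure_minimal support_deriv_subset (isClosed_tsupport b)).trans hbs
      · have : deriv b = fun _ => (0:ℝ) := by
          funext z; rw [hb1]; simp
        rw [this]
        simp [tsupport, Function.support]
    · refine ⟨fun y => (l - j) * (a y * dN y), fun s => b s * deriv φ s,
        contDiff_const.mul (ha.mul hdNc), hb.mul (contDiff_infty_iff_deriv.mp hφs).2,
        Or.inl ?_, fun τ y => rfl⟩
      refine closure_minimal ?_ (isClosed_tsupport φ)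
      intro x hx
      have h1 : x ∈ Function.support (deriv φ) := by
        simp only [Function.mem_support] at hx ⊢
        exact fun h0 => hx (by rw [h0, mul_zero])
      exact support_deriv_subset h1
    · intro τ y
      have hval := (key τ y).fderiv
      rw [hval]
      have hcast : l - (((j:ℕ)+1 : ℕ) : ℝ) = l - (j:ℝ) - 1 := by push_cast; ring
      rw [hcast]
      simp only [ContinuousLinearMap.add_apply, ContinuousLinearMap.smul_apply, smul_eq_mul]
      show (a y * b (N y + τ)) * (((l - j) * φ (N y + τ) ^ (l - (j:ℝ) - 1) * deriv φ (N y + τ)) * dN y)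
         + (φ (N y + τ) ^ (l - (j:ℝ))) * (a y * (deriv b (N y + τ) * dN y) + b (N y + τ) * fderiv ℝ a y (EuclideanSpace.single i (1:ℝ)))
         = _
      ring


lemma Good.step (hφs : ContDiff ℝ ∞ φ) {k : ℕ} {f} (hk : (k : ℝ) + 1 ≤ l)
    (h : Good n m l φ k f) (i : Fin n) :
    (∀ τ, Differentiable ℝ (f τ)) ∧
    Good n m l φ (k + 1) (fun τ y => fderiv ℝ (f τ) y (EuclideanSpace.single i (1:ℝ))) := by
  induction h with
  | @elem j f hj he =>
      have hj1 : 1 ≤ l - (j : ℝ) := by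
        have : (j : ℝ) ≤ (k : ℝ) := by exact_mod_cast hj
        linarith
      obtain ⟨hd, f1, f2, f3, h1, h2, h3, hv⟩ := he.step hφs hj1 i
      refine ⟨hd, Good.congr (Good.add (Good.add
        (Good.elem (show j ≤ k+1 by omega) h1) (Good.elem (show j ≤ k+1 by omega) h2))
        (Good.elem (show j+1 ≤ k+1 by omega) h3)) ?_⟩
      intro τ y
      exact hv τ y
  | @add f g hf hg ihf ihg =>
      refine ⟨fun τ => (ihf.1 τ).add (ihg.1 τ), Good.congr (Good.add ihf.2 ihg.2) ?_⟩
      intro τ y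
      rw [fderiv_fun_add ((ihf.1 τ) y) ((ihg.1 τ) y)]
      simp
  | @congr f g hf he ih =>
      have hfg : g = f := funext fun τ => funext fun y => he τ y
      rw [hfg]
      exact ih

lemma Good.lapStep (hφs : ContDiff ℝ ∞ φ) {k : ℕ} {f} (hk : (k : ℝ) + 2 ≤ l)
    (h : Good n m l φ k f) :
    Good n m l φ (k + 2) (fun τ y => lap n (f τ) y) := by
  have h2 : ∀ i : Fin n, Good n m l φ (k + 2)
      (fun τ y => fderiv ℝ (fun z => fderiv ℝ (f τ) z (EuclideanSpace.single i (1:ℝ))) y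
        (EuclideanSpace.single i (1:ℝ))) := by
    intro i
    have h1 := (h.step hφs (by linarith) i).2
    have := (h1.step hφs (by push_cast; linarith) i).2
    exact this
  refine Good.congr (good_sum Finset.univ _ (fun i _ => h2 i)) ?_
  intro τ y
  rfl

lemma Good.iterSteps (hφs : ContDiff ℝ ∞ φ) {p : ℕ} :
    ∀ {k : ℕ} {f}, (k : ℝ) + 2 * p ≤ l → Good n m l φ k f →
    Good n m l φ (k + 2 * p) (fun τ y => (lap n)^[p] (f τ) y) := by
  induction p with
  | zero =>
      intro k f hk h
      exact Good.congr (h.mono (by omega)) (fun τ y => by simp)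
  | succ p ih =>
      intro k f hk h
      have h1 : Good n m l φ (k + 2) (fun τ y => lap n (f τ) y) :=
        h.lapStep hφs (by push_cast at hk ⊢; nlinarith [Nat.cast_nonneg (α := ℝ) p])
      have h2 := ih (k := k + 2) (f := fun τ y => lap n (f τ) y)
        (by push_cast at hk ⊢; linarith) h1
      refine Good.congr (h2.mono (by omega)) ?_
      intro τ y
      rw [Function.iterate_succ_apply]

lemma Elem.bound (hm : 1 ≤ m) (hl : 2 * (m : ℝ) ≤ l) (hφsupp : HasCompactSupport φ)
    (hφ0 : ∀ s, 0 ≤ φ s) (hφ1 : ∀ s, φ s ≤ 1) {j : ℕ} {f} (hj : j ≤ 2 * m)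
    (h : Elem n m l φ j f) :
    ∃ C : ℝ, 0 < C ∧ ∀ τ : ℝ, 0 ≤ τ → ∀ y : EuclideanSpace ℝ (Fin n),
      |f τ y| ≤ C * φ (‖y‖ ^ (2 * m) + τ) ^ (l - 2 * m) := by
  obtain ⟨a, b, ha, hb, hbs, hfe⟩ := h
  obtain ⟨R, hR⟩ : ∃ R, ∀ s ∈ tsupport φ, ‖s‖ ≤ R :=
    isBounded_iff_forall_norm_le.mp hφsupp.isBounded
  set r : ℝ := max R 1 with hr
  obtain ⟨Ca, hCa⟩ : ∃ Ca, ∀ y ∈ Metric.closedBall (0 : EuclideanSpace ℝ (Fin n)) r, ‖a y‖ ≤ Ca :=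
    (isCompact_closedBall (0 : EuclideanSpace ℝ (Fin n)) r).exists_bound_of_continuousOn
      (ha.continuous.continuousOn)
  obtain ⟨Cb, hCb⟩ : ∃ Cb, ∀ s : ℝ, ‖b s‖ ≤ Cb := by
    rcases hbs with hbs | ⟨_, hb1⟩
    · have hcs : HasCompactSupport b :=
        IsCompact.of_isClosed_subset hφsupp (isClosed_tsupport b) hbs
      exact hb.continuous.bounded_above_of_compact_support hcs
    · exact ⟨1, fun s => by rw [hb1]; simp⟩
  set A : ℝ := max Ca 0 + 1 with hA
  set B : ℝ := max Cb 0 + 1 with hB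
  have hApos : 0 < A := by positivity
  have hBpos : 0 < B := by positivity
  refine ⟨A * B, by positivity, ?_⟩
  intro τ hτ y
  set t : ℝ := ‖y‖ ^ (2 * m) + τ with ht
  rw [hfe τ y]
  have hrpow_nonneg : (0:ℝ) ≤ φ t ^ (l - 2 * (m:ℝ)) := Real.rpow_nonneg (hφ0 t) _
  by_cases hts : t ∈ tsupport φ
  · -- |y| ≤ r
    have hyr : ‖y‖ ≤ r := by
      by_contra hy
      push_neg at hy
      have h1 : (1:ℝ) ≤ ‖y‖ := le_trans (le_max_right R 1) hy.le
      have h2 : ‖y‖ ≤ ‖y‖ ^ (2 * m) := le_self_pow₀ h1 (by omega)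
      have h3 : t ≤ R := le_trans (le_abs_self t) (hR t hts)
      have h4 : R ≤ r := le_max_left R 1
      have h5 : ‖y‖ ^ (2*m) ≤ t := by
        rw [ht]; linarith
      linarith
    have ha' : |a y| ≤ A := by
      have := hCa y (by simpa [Metric.mem_closedBall, dist_eq_norm] using hyr)
      rw [hA]
      calc |a y| ≤ Ca := this
        _ ≤ max Ca 0 + 1 := by
            have := le_max_left Ca (0:ℝ); linarith
    have hb' : |b t| ≤ B := by
      have := hCb t
      rw [hB]
      calc |b t| ≤ Cb := this
        _ ≤ max Cb 0 + 1 := by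
            have := le_max_left Cb (0:ℝ); linarith
    have hpow : φ t ^ (l - (j:ℝ)) ≤ φ t ^ (l - 2 * (m:ℝ)) := by
      rcases (hφ0 t).eq_or_lt with h0 | h0
      · rcases eq_or_ne (l - (j:ℝ)) 0 with hz | hz
        · have hj2 : (j : ℝ) ≤ 2 * m := by exact_mod_cast hj
          have hjl : l = (j:ℝ) := sub_eq_zero.mp hz
          have h2ml : l - 2 * (m:ℝ) = 0 := by linarith
          rw [hz, h2ml]
        · rw [← h0, Real.zero_rpow hz]
          exact Real.rpow_nonneg le_rfl _
      · apply Real.rpow_le_rpow_of_exponent_ge h0 (hφ1 t)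
        have : (j : ℝ) ≤ 2 * m := by exact_mod_cast hj
        linarith
    have habs : |a y * b t * φ t ^ (l - (j:ℝ))| = |a y| * |b t| * φ t ^ (l - (j:ℝ)) := by
      rw [abs_mul, abs_mul, abs_of_nonneg (Real.rpow_nonneg (hφ0 t) _)]
    rw [habs]
    calc |a y| * |b t| * φ t ^ (l - (j:ℝ))
        ≤ A * B * φ t ^ (l - (j:ℝ)) := by
          apply mul_le_mul_of_nonneg_right _ (Real.rpow_nonneg (hφ0 t) _)
          exact mul_le_mul ha' hb' (abs_nonneg _) hApos.le
      _ ≤ A * B * φ t ^ (l - 2 * (m:ℝ)) := by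
          apply mul_le_mul_of_nonneg_left hpow (by positivity)
  · -- outside the support: the term vanishes
    have hφ0t : φ t = 0 := image_eq_zero_of_notMem_tsupport hts
    have hzero : a y * b t * φ t ^ (l - (j:ℝ)) = 0 := by
      rcases hbs with hbs | ⟨hj0, hb1⟩
      · have : b t = 0 := image_eq_zero_of_notMem_tsupport (fun hmem => hts (hbs hmem))
        rw [this]; ring
      · have hlne : l - ((j:ℕ):ℝ) ≠ 0 := by
          rw [hj0]
          push_cast
          have : (1:ℝ) ≤ (m:ℝ) := by exact_mod_cast hm
          intro hc; rw [sub_zero] at hc; subst hc; linarith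
        rw [hφ0t, Real.zero_rpow hlne]
        ring
    rw [hzero]
    rw [abs_zero]
    positivity


lemma Good.bound (hm : 1 ≤ m) (hl : 2 * (m : ℝ) ≤ l) (hφsupp : HasCompactSupport φ)
    (hφ0 : ∀ s, 0 ≤ φ s) (hφ1 : ∀ s, φ s ≤ 1) {k : ℕ} {f} (hk : k ≤ 2 * m)
    (h : Good n m l φ k f) :
    ∃ C : ℝ, 0 < C ∧ ∀ τ : ℝ, 0 ≤ τ → ∀ y : EuclideanSpace ℝ (Fin n),
      |f τ y| ≤ C * φ (‖y‖ ^ (2 * m) + τ) ^ (l - 2 * m) := by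
  induction h with
  | @elem j f hj he => exact he.bound hm hl hφsupp hφ0 hφ1 (hj.trans hk) 
  | @add f g hf hg ihf ihg =>
      obtain ⟨C1, hC1, h1⟩ := ihf
      obtain ⟨C2, hC2, h2⟩ := ihg
      refine ⟨C1 + C2, by linarith, fun τ hτ y => ?_⟩
      calc |f τ y + g τ y| ≤ |f τ y| + |g τ y| := abs_add_le _ _
        _ ≤ C1 * φ (‖y‖ ^ (2 * m) + τ) ^ (l - 2 * m)
            + C2 * φ (‖y‖ ^ (2 * m) + τ) ^ (l - 2 * m) := add_le_add (h1 τ hτ y) (h2 τ hτ y)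
        _ = (C1 + C2) * φ (‖y‖ ^ (2 * m) + τ) ^ (l - 2 * m) := by ring
  | @congr f g hf he ih =>
      obtain ⟨C, hC, h1⟩ := ih
      exact ⟨C, hC, fun τ hτ y => by rw [he τ y]; exact h1 τ hτ y⟩

end Statement9Aux

/-- uniform bound `|Δ^m [φ(|y|^{2m}+τ)^l]| ≤ C φ(|y|^{2m}+τ)^{l-2m}`. -/
theorem statement9 (n m : ℕ) (hn : 1 ≤ n) (hm : 1 ≤ m) (l : ℝ) (hl : (2 * m : ℝ) ≤ l)
    (φ : ℝ → ℝ) (hφsmooth : ContDiff ℝ (⊤ : ℕ∞) φ) (hφsupp : HasCompactSupport φ)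
    (hφ0 : ∀ s, 0 ≤ φ s) (hφ1 : ∀ s, φ s ≤ 1) :
    ∃ C : ℝ, 0 < C ∧ ∀ τ : ℝ, 0 ≤ τ → ∀ y : EuclideanSpace ℝ (Fin n),
      |iterLap n m (fun z => φ (‖z‖ ^ (2 * m) + τ) ^ l) y| ≤
        C * φ (‖y‖ ^ (2 * m) + τ) ^ (l - 2 * m) := by
  have hφ : ContDiff ℝ (((⊤:ℕ∞) : WithTop ℕ∞)) φ := hφsmooth.of_le (by simp)
  have hψ : Statement9Aux.Good n m l φ 0 (fun τ y => φ (‖y‖ ^ (2 * m) + τ) ^ l) := by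
    refine Statement9Aux.Good.elem le_rfl ⟨fun _ => 1, fun _ => 1, contDiff_const,
      contDiff_const, Or.inr ⟨rfl, rfl⟩, ?_⟩
    intro τ y
    norm_num
  have h2m := hψ.iterSteps hφ (p := m) (by push_cast; linarith)
  obtain ⟨C, hC, hbd⟩ := h2m.bound hm hl hφsupp hφ0 hφ1 (by omega)
  refine ⟨C, hC, fun τ hτ y => ?_⟩
  exact hbd τ hτ y
end

section
/- Let p > 1, a > 0, C > 0, ε > 0, R_0 > 0, and T > 2R_0. Suppose W : [2R_0, T] → [0,∞) is differentiable and nondecreasing, and that R^{a−1} ≤ C W'(R) (ε + W(R))^{−p} for all R ∈ [2R_0, T]. Then T^a ≤ (2R_0)^a + (aC/(p−1)) ε^{−(p−1)}. -/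
open Set

/-- With `K = a C / (p - 1)`, the hypothesis says `d/dR (R ^ a) ≤ -K d/dR (V R ^ (1 - p))`,
so `R ^ a + K V R ^ (1 - p)` cannot increase. -/
theorem antitoneOn_rpow_add_mul_rpow_one_sub {a p C L T : ℝ} {V V' : ℝ → ℝ}
    (ha : 0 ≤ a) (hp : p ≠ 1) (hL : 0 < L)
    (hV : ∀ R ∈ Icc L T, 0 < V R)
    (hV' : ∀ R ∈ Icc L T, HasDerivWithinAt V (V' R) (Icc L T) R)
    (hineq : ∀ R ∈ Icc L T, R ^ (a - 1) ≤ C * V' R * V R ^ (-p)) :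
    AntitoneOn (fun R ↦ R ^ a + a * C / (p - 1) * V R ^ (1 - p)) (Icc L T) := by
  have hderiv : ∀ R ∈ Icc L T,
      HasDerivWithinAt (fun R ↦ R ^ a + a * C / (p - 1) * V R ^ (1 - p))
      (a * (R ^ (a - 1) - C * V' R * V R ^ (-p))) (Icc L T) R := by
    intro R hR
    have hpow : HasDerivWithinAt (fun x : ℝ ↦ x ^ a) (a * R ^ (a - 1)) (Icc L T) R :=
      (Real.hasDerivAt_rpow_const (Or.inl (hL.trans_le hR.1).ne')).hasDerivWithinAt
    refine (hpow.add (((hV' R hR).rpow_const (Or.inl (hV R hR).ne')).const_mul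
      (a * C / (p - 1)))).congr_deriv ?_
    rw [show 1 - p - 1 = -p by ring]
    field_simp [sub_ne_zero.mpr hp]
    ring
  refine antitoneOn_of_hasDerivWithinAt_nonpos (convex_Icc L T)
    (fun R hR ↦ (hderiv R hR).continuousWithinAt)
    (fun R hR ↦ (hderiv R (interior_subset hR)).mono interior_subset) fun R hR ↦ ?_
  exact mul_nonpos_of_nonneg_of_nonpos ha (sub_nonpos.mpr (hineq R (interior_subset hR)))

theorem statement12_general (p a C ε R₀ T : ℝ) (hp : 1 < p) (ha : 0 < a) (hC : 0 < C)
    (hε : 0 < ε) (hR₀ : 0 < R₀) (hT : 2 * R₀ < T)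
    (W W' : ℝ → ℝ)
    (hWnonneg : ∀ R ∈ Set.Icc (2 * R₀) T, 0 ≤ W R)
    (hWderiv : ∀ R ∈ Set.Icc (2 * R₀) T, HasDerivWithinAt W (W' R) (Set.Icc (2 * R₀) T) R)
    (hineq : ∀ R ∈ Set.Icc (2 * R₀) T, R ^ (a - 1) ≤ C * W' R * (ε + W R) ^ (-p)) :
    T ^ a ≤ (2 * R₀) ^ a + a * C / (p - 1) * ε ^ (-(p - 1)) := by
  have hεW : ∀ R ∈ Icc (2 * R₀) T, 0 < ε + W R := fun R hR ↦ by linarith [hWnonneg R hR]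
  have hstart : 2 * R₀ ∈ Icc (2 * R₀) T := left_mem_Icc.mpr hT.le
  have hend : T ∈ Icc (2 * R₀) T := right_mem_Icc.mpr hT.le
  have hK : 0 ≤ a * C / (p - 1) := div_nonneg (mul_pos ha hC).le (sub_pos.mpr hp).le
  have hanti := antitoneOn_rpow_add_mul_rpow_one_sub ha.le hp.ne' (by positivity) hεW
    (fun R hR ↦ (hWderiv R hR).const_add ε) hineq hstart hend hT.le
  have hstart_le : (ε + W (2 * R₀)) ^ (1 - p) ≤ ε ^ (-(p - 1)) := by
    rw [neg_sub]
    exact Real.rpow_le_rpow_of_nonpos hε (by linarith [hWnonneg _ hstart]) (by linarith)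
  calc T ^ a ≤ T ^ a + a * C / (p - 1) * (ε + W T) ^ (1 - p) :=
        le_add_of_nonneg_right (mul_nonneg hK (Real.rpow_nonneg (hεW T hend).le _))
    _ ≤ (2 * R₀) ^ a + a * C / (p - 1) * (ε + W (2 * R₀)) ^ (1 - p) := hanti
    _ ≤ (2 * R₀) ^ a + a * C / (p - 1) * ε ^ (-(p - 1)) := by gcongr

/-- ODE lemma yielding the subcritical upper lifespan bound. -/
theorem statement12 (p a C ε R₀ T : ℝ) (hp : 1 < p) (ha : 0 < a) (hC : 0 < C)
    (hε : 0 < ε) (hR₀ : 0 < R₀) (hT : 2 * R₀ < T)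
    (W W' : ℝ → ℝ)
    (hWnonneg : ∀ R ∈ Set.Icc (2 * R₀) T, 0 ≤ W R)
    (hWderiv : ∀ R ∈ Set.Icc (2 * R₀) T, HasDerivWithinAt W (W' R) (Set.Icc (2 * R₀) T) R)
    (hWmono : MonotoneOn W (Set.Icc (2 * R₀) T))
    (hineq : ∀ R ∈ Set.Icc (2 * R₀) T, R ^ (a - 1) ≤ C * W' R * (ε + W R) ^ (-p)) :
    T ^ a ≤ (2 * R₀) ^ a + a * C / (p - 1) * ε ^ (-(p - 1)) :=
  statement12_general p a C ε R₀ T hp ha hC hε hR₀ hT W W' hWnonneg hWderiv hineq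
end

section
/- Let p > 1, C > 0, ε > 0, R_0 > 0, and T > 2R_0. Suppose W : [2R_0, T] → [0,∞) is differentiable and nondecreasing, and that R^{−1} ≤ C W'(R) (ε + W(R))^{−p} for all R ∈ [2R_0, T]. Then log(T/(2R_0)) ≤ (C/(p−1)) ε^{−(p−1)}. -/
open Set

/-- ODE lemma yielding the critical (logarithmic) upper lifespan bound. -/
theorem statement13 (p C ε R₀ T : ℝ) (hp : 1 < p) (hC : 0 < C)
    (hε : 0 < ε) (hR₀ : 0 < R₀) (hT : 2 * R₀ < T)
    (W W' : ℝ → ℝ)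
    (hWnonneg : ∀ R ∈ Set.Icc (2 * R₀) T, 0 ≤ W R)
    (hWderiv : ∀ R ∈ Set.Icc (2 * R₀) T, HasDerivWithinAt W (W' R) (Set.Icc (2 * R₀) T) R)
    (hWmono : MonotoneOn W (Set.Icc (2 * R₀) T))
    (hineq : ∀ R ∈ Set.Icc (2 * R₀) T, R⁻¹ ≤ C * W' R * (ε + W R) ^ (-p)) :
    Real.log (T / (2 * R₀)) ≤ C / (p - 1) * ε ^ (-(p - 1)) := by
  set s : Set ℝ := Set.Icc (2 * R₀) T with hs
  have h2R₀ : 0 < 2 * R₀ := by linarith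
  have hpos : ∀ R ∈ s, 0 < R := fun R hR => lt_of_lt_of_le h2R₀ hR.1
  have hbase : ∀ R ∈ s, 0 < ε + W R := fun R hR => by
    have := hWnonneg R hR; linarith
  have h1p : (1 : ℝ) - p < 0 := by linarith
  -- auxiliary function
  set h : ℝ → ℝ := fun R => C / (1 - p) * (ε + W R) ^ (1 - p) - Real.log R with hh
  have hmem2 : (2 * R₀) ∈ s := ⟨le_refl _, le_of_lt hT⟩
  have hmemT : T ∈ s := ⟨le_of_lt hT, le_refl _⟩
  -- derivative within s at any point of s
  have hderiv : ∀ x ∈ s, HasDerivWithinAt h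
      (C / (1 - p) * (W' x * (1 - p) * (ε + W x) ^ (1 - p - 1)) - x⁻¹) s x := by
    intro x hx
    have h1 : HasDerivWithinAt (fun R => ε + W R) (W' x) s x := (hWderiv x hx).const_add ε
    have h1' : HasDerivWithinAt (fun R => (ε + W R) ^ (1 - p))
        (W' x * (1 - p) * (ε + W x) ^ (1 - p - 1)) s x :=
      h1.rpow_const (Or.inl (ne_of_gt (hbase x hx)))
    have h2 := h1'.const_mul (C / (1 - p))
    have h3 : HasDerivWithinAt Real.log x⁻¹ s x :=
      (Real.hasDerivAt_log (ne_of_gt (hpos x hx))).hasDerivWithinAt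
    exact h2.sub h3
  -- derivative is nonneg
  have hd_nonneg : ∀ x ∈ s, 0 ≤ C / (1 - p) * (W' x * (1 - p) * (ε + W x) ^ (1 - p - 1)) - x⁻¹ := by
    intro x hx
    have key := hineq x hx
    have hexp : (1 : ℝ) - p - 1 = -p := by ring
    rw [hexp]
    have hne : (1 : ℝ) - p ≠ 0 := ne_of_lt h1p
    have : C / (1 - p) * (W' x * (1 - p) * (ε + W x) ^ (-p))
        = C * W' x * (ε + W x) ^ (-p) := by field_simp
    rw [this]
    linarith
  have hconv : Convex ℝ s := convex_Icc _ _
  have hcont : ContinuousOn h s := fun x hx => (hderiv x hx).continuousWithinAt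
  have hmono : MonotoneOn h s :=
    monotoneOn_of_hasDerivWithinAt_nonneg hconv hcont
      (fun x hx => ((hderiv x (interior_subset hx)).mono interior_subset))
      (fun x hx => hd_nonneg x (interior_subset hx))
  have hle := hmono hmem2 hmemT (le_of_lt hT)
  -- unfold
  have hlog : Real.log (T / (2 * R₀)) = Real.log T - Real.log (2 * R₀) :=
    Real.log_div (ne_of_gt (lt_trans h2R₀ hT)) (ne_of_gt h2R₀)
  have hkey : Real.log T - Real.log (2 * R₀)
      ≤ C / (p - 1) * ((ε + W (2 * R₀)) ^ (1 - p) - (ε + W T) ^ (1 - p)) := by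
    have hne : (1 : ℝ) - p ≠ 0 := ne_of_lt h1p
    simp only [hh] at hle
    have hcc : C / (1 - p) = -(C / (p - 1)) := by
      rw [neg_div', div_eq_div_iff hne (by intro hz; apply hne; linarith)]
      ring
    have : C / (1 - p) * (ε + W T) ^ (1-p) - C / (1 - p) * (ε + W (2*R₀)) ^ (1-p)
        = C / (p - 1) * ((ε + W (2 * R₀)) ^ (1 - p) - (ε + W T) ^ (1 - p)) := by
      rw [hcc]; ring
    linarith [hle, this]
  have hb1 : (ε + W (2 * R₀)) ^ (1 - p) ≤ ε ^ (1 - p) :=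
    Real.rpow_le_rpow_of_nonpos hε (by linarith [hWnonneg _ hmem2]) (le_of_lt h1p)
  have hb2 : 0 ≤ (ε + W T) ^ (1 - p) := Real.rpow_nonneg (le_of_lt (hbase T hmemT)) _
  have hεexp : ε ^ (-(p - 1)) = ε ^ (1 - p) := by norm_num
  rw [hlog, hεexp]
  have hCp : 0 < C / (p - 1) := div_pos hC (by linarith)
  calc Real.log T - Real.log (2 * R₀)
      ≤ C / (p - 1) * ((ε + W (2 * R₀)) ^ (1 - p) - (ε + W T) ^ (1 - p)) := hkey
    _ ≤ C / (p - 1) * ε ^ (1 - p) := by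
        apply mul_le_mul_of_nonneg_left _ (le_of_lt hCp)
        linarith
end
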